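/- Let h: ℝ^d → ℝ^m be Lipschitz, let K ⊆ C_d be compact, and let (ψ_n) be a sequence in L²_m with sup_n ∫₀ᵀ‖ψ_n(s)‖² ds < ∞ converging weakly in L²_m to ψ. Then sup_{η∈K} | ∫₀ᵀ ⟨h(η(s)), ψ_n(s) − ψ(s)⟩ ds | → 0 as n → ∞. -/

import Mathlib

/-! For fixed `n`, the pairing `η ↦ ∫₀ᵀ ⟨h(η(s)), ψₙ(s) - ψ(s)⟩ ds` is Lipschitz on `C_d` with
constant `Lip(h) · ‖ψₙ - ψ‖_{L¹}`, and the `L²` bound on `(ψₙ)` bounds these `L¹` norms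
uniformly in `n`. So the pairings form an equicontinuous family; weak convergence makes them tend
to `0` pointwise, and pointwise convergence of an equicontinuous family is uniform on compact
sets. -/

open MeasureTheory Set Filter Topology
open scoped RealInnerProductSpace ENNReal NNReal

noncomputable section

/-- `C([0,T]; ℝ^p)` with the supremum norm. -/
abbrev Pth (T : ℝ) (p : ℕ) := C(Set.Icc (0:ℝ) T, EuclideanSpace ℝ (Fin p))

/-- Extension of a path on `[0,T]` to all of `ℝ` by projection onto `[0,T]`. -/
def pext {T : ℝ} (hT : (0:ℝ) ≤ T) {p : ℕ} (η : Pth T p) : ℝ → EuclideanSpace ℝ (Fin p) :=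
  fun s => η (Set.projIcc (0:ℝ) T hT s)

/-- Square integrability on `[0,T]`. -/
def L2on (T : ℝ) {p : ℕ} (f : ℝ → EuclideanSpace ℝ (Fin p)) : Prop :=
  MeasureTheory.MemLp f 2 (MeasureTheory.volume.restrict (Set.Icc (0:ℝ) T))

theorem EquicontinuousOn.tendstoUniformlyOn_of_tendsto {ι X α : Type*} [TopologicalSpace X]
    [UniformSpace α] {F : ι → X → α} {f : X → α} {l : Filter ι} {K : Set X}
    (hK : IsCompact K) (hF : EquicontinuousOn F K)
    (hlim : ∀ x ∈ K, Tendsto (F · x) l (𝓝 (f x))) :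
    TendstoUniformlyOn F f l K := by
  have : CompactSpace K := isCompact_iff_compactSpace.mp hK
  rw [tendstoUniformlyOn_iff_restrict]
  exact UniformFun.tendsto_iff_tendstoUniformly.mp <|
    ((equicontinuous_restrict_iff F).mpr hF).tendsto_uniformFun_iff_pi l _ |>.mpr
      (tendsto_pi_nhds.mpr fun x => hlim x x.2)

theorem LipschitzWith.norm_le_norm_zero_add {E F : Type*} [SeminormedAddCommGroup E]
    [SeminormedAddCommGroup F] {f : E → F} {K : ℝ≥0} (hf : LipschitzWith K f) (x : E) :
    ‖f x‖ ≤ ‖f 0‖ + K * ‖x‖ :=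
  calc ‖f x‖ ≤ ‖f 0‖ + dist (f x) (f 0) := by rw [dist_eq_norm]; exact norm_le_insert' _ _
    _ ≤ ‖f 0‖ + K * ‖x‖ := by simpa using hf.dist_le_mul x 0

section Pairing

variable {α E : Type*} [MeasurableSpace α] {μ : Measure α} [NormedAddCommGroup E]

theorem integral_norm_le_of_memLp_two [IsFiniteMeasure μ] {f : α → E} (hf : MemLp f 2 μ) :
    ∫ s, ‖f s‖ ∂μ ≤ (μ.real univ + ∫ s, ‖f s‖ ^ 2 ∂μ) / 2 := by
  have hsq : Integrable (fun s => ‖f s‖ ^ 2) μ := hf.integrable_norm_pow two_ne_zero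
  calc ∫ s, ‖f s‖ ∂μ ≤ ∫ s, (1 + ‖f s‖ ^ 2) / 2 ∂μ :=
        integral_mono (hf.integrable one_le_two).norm (((integrable_const 1).add hsq).div_const 2)
          fun s => by nlinarith [sq_nonneg (‖f s‖ - 1)]
    _ = (μ.real univ + ∫ s, ‖f s‖ ^ 2 ∂μ) / 2 := by
        rw [integral_div, integral_add (integrable_const 1) hsq, integral_const, smul_eq_mul,
          mul_one]

theorem exists_integral_norm_sub_le_of_integral_sq_le [IsFiniteMeasure μ] {ι : Type*}
    {f : ι → α → E} {g : α → E} {M : ℝ} (hf : ∀ i, MemLp (f i) 2 μ) (hg : MemLp g 2 μ)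
    (hM : ∀ i, ∫ s, ‖f i s‖ ^ 2 ∂μ ≤ M) :
    ∃ C : ℝ≥0, ∀ i, ∫ s, ‖f i s - g s‖ ∂μ ≤ C := by
  refine ⟨Real.toNNReal ((μ.real univ + M) / 2 + ∫ s, ‖g s‖ ∂μ), fun i => ?_⟩
  have hfi := ((hf i).integrable one_le_two).norm
  have hgi := (hg.integrable one_le_two).norm
  calc ∫ s, ‖f i s - g s‖ ∂μ ≤ ∫ s, ‖f i s‖ + ‖g s‖ ∂μ :=
        integral_mono (((hf i).sub hg).integrable one_le_two).norm (hfi.add hgi)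
          fun s => norm_sub_le _ _
    _ = ∫ s, ‖f i s‖ ∂μ + ∫ s, ‖g s‖ ∂μ := integral_add hfi hgi
    _ ≤ (μ.real univ + M) / 2 + ∫ s, ‖g s‖ ∂μ := by
        linarith [integral_norm_le_of_memLp_two (hf i), hM i]
    _ ≤ _ := Real.le_coe_toNNReal _

variable [InnerProductSpace ℝ E]

theorem lipschitzWith_integral_inner {X : Type*} [PseudoMetricSpace X] {g : X → α → E}
    {φ : α → E} {K C : ℝ≥0} (hg : ∀ s, LipschitzWith K (g · s))
    (hint : ∀ x, Integrable (fun s => ⟪g x s, φ s⟫) μ) (hφ : Integrable φ μ)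
    (hC : ∫ s, ‖φ s‖ ∂μ ≤ C) :
    LipschitzWith (K * C) (fun x => ∫ s, ⟪g x s, φ s⟫ ∂μ) := by
  refine LipschitzWith.of_dist_le_mul fun x y => ?_
  rw [Real.dist_eq, ← integral_sub (hint x) (hint y)]
  calc ‖∫ s, ⟪g x s, φ s⟫ - ⟪g y s, φ s⟫ ∂μ‖ ≤ ∫ s, K * dist x y * ‖φ s‖ ∂μ :=
        norm_integral_le_of_norm_le (hφ.norm.const_mul _) <| ae_of_all _ fun s => by
          rw [← inner_sub_left, Real.norm_eq_abs]
          refine (abs_real_inner_le_norm _ _).trans ?_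
          gcongr
          rw [← dist_eq_norm]
          exact (hg s).dist_le_mul x y
    _ = K * dist x y * ∫ s, ‖φ s‖ ∂μ := integral_const_mul _ _
    _ ≤ K * dist x y * C := by gcongr
    _ = ↑(K * C) * dist x y := by push_cast; ring

theorem tendsto_integral_inner_sub_of_tendsto {f : α → E} {ψn : ℕ → α → E} {ψ : α → E}
    (hn : ∀ n, Integrable (fun s => ⟪f s, ψn n s⟫) μ) (h : Integrable (fun s => ⟪f s, ψ s⟫) μ)
    (hlim : Tendsto (fun n => ∫ s, ⟪ψn n s, f s⟫ ∂μ) atTop (𝓝 (∫ s, ⟪ψ s, f s⟫ ∂μ))) :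
    Tendsto (fun n => ∫ s, ⟪f s, ψn n s - ψ s⟫ ∂μ) atTop (𝓝 0) := by
  have hsub := hlim.sub_const (∫ s, ⟪ψ s, f s⟫ ∂μ)
  rw [sub_self] at hsub
  refine hsub.congr fun n => ?_
  simp only [inner_sub_right, integral_sub (hn n) h, real_inner_comm (f _)]

end Pairing

section Paths

variable {T : ℝ} (hT : 0 ≤ T) {p : ℕ}

theorem continuous_pext (η : Pth T p) : Continuous (pext hT η) :=
  η.continuous.comp continuous_projIcc

theorem norm_pext_le (η : Pth T p) (s : ℝ) : ‖pext hT η s‖ ≤ ‖η‖ :=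
  η.norm_coe_le_norm _

theorem lipschitzWith_pext_apply (s : ℝ) : LipschitzWith 1 (fun η : Pth T p => pext hT η s) :=
  LipschitzWith.mk_one fun _ _ => ContinuousMap.dist_apply_le_dist _

end Paths

/-- **Uniform convergence over compact path sets of the weak-`L²` pairings (eq. (6.500)).**
If `h` is Lipschitz, `K ⊆ C_d` is compact and `ψ_n → ψ` weakly in `L²` with bounded norms,
then `sup_{η ∈ K} |∫₀ᵀ ⟨h(η(s)), ψ_n(s) − ψ(s)⟩ ds| → 0`. -/
theorem pairing_uniform_convergence_on_compacts
    {T : ℝ} (hT : 0 < T) {d m : ℕ}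
    (h : EuclideanSpace ℝ (Fin d) → EuclideanSpace ℝ (Fin m))
    (clip : ℝ≥0) (hh : LipschitzWith clip h)
    (K : Set (Pth T d)) (hK : IsCompact K)
    (ψn : ℕ → ℝ → EuclideanSpace ℝ (Fin m)) (ψ : ℝ → EuclideanSpace ℝ (Fin m))
    (hψnL2 : ∀ n, L2on T (ψn n)) (hψL2 : L2on T ψ)
    (hψbd : ∃ M : ℝ, ∀ n, (∫ s in Set.Icc (0:ℝ) T, ‖ψn n s‖ ^ 2) ≤ M)
    (hweak : ∀ f : ℝ → EuclideanSpace ℝ (Fin m), L2on T f →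
      Filter.Tendsto (fun n => ∫ s in Set.Icc (0:ℝ) T, ⟪ψn n s, f s⟫)
        Filter.atTop (𝓝 (∫ s in Set.Icc (0:ℝ) T, ⟪ψ s, f s⟫))) :
    ∀ δ > (0:ℝ), ∃ N : ℕ, ∀ n ≥ N, ∀ η ∈ K,
      |∫ s in Set.Icc (0:ℝ) T, ⟪h (pext hT.le η s), ψn n s - ψ s⟫| < δ := by
  set μ : Measure ℝ := volume.restrict (Icc 0 T)
  obtain ⟨M, hM⟩ := hψbd
  obtain ⟨C, hC⟩ := exists_integral_norm_sub_le_of_integral_sq_le hψnL2 hψL2 hM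
  have hψnInt n : Integrable (ψn n) μ := (hψnL2 n).integrable one_le_two
  have hψInt : Integrable ψ μ := hψL2.integrable one_le_two
  have hbdd (η : Pth T d) s : ‖h (pext hT.le η s)‖ ≤ ‖h 0‖ + clip * ‖η‖ :=
    (hh.norm_le_norm_zero_add _).trans (by gcongr; exact norm_pext_le hT.le η s)
  have hmeas (η : Pth T d) : AEStronglyMeasurable (fun s => h (pext hT.le η s)) μ :=
    (hh.continuous.comp (continuous_pext hT.le η)).aestronglyMeasurable
  have hint {φ : ℝ → EuclideanSpace ℝ (Fin m)} (hφ : Integrable φ μ) (η : Pth T d) :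
      Integrable (fun s => ⟪h (pext hT.le η s), φ s⟫) μ :=
    (innerSL ℝ).integrable_of_bilin_of_bdd_left _ (hmeas η) (ae_of_all _ (hbdd η)) hφ
  have hlip n : LipschitzWith (clip * C)
      (fun η : Pth T d => ∫ s, ⟪h (pext hT.le η s), ψn n s - ψ s⟫ ∂μ) :=
    lipschitzWith_integral_inner
      (fun s => mul_one clip ▸ hh.comp (lipschitzWith_pext_apply hT.le s))
      (hint ((hψnInt n).sub hψInt)) ((hψnInt n).sub hψInt) (hC n)
  have hlim (η : Pth T d) :
      Tendsto (fun n => ∫ s, ⟪h (pext hT.le η s), ψn n s - ψ s⟫ ∂μ) atTop (𝓝 0) :=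
    tendsto_integral_inner_sub_of_tendsto (fun n => hint (hψnInt n) η) (hint hψInt η)
      (hweak _ (MemLp.of_bound (hmeas η) _ (ae_of_all _ (hbdd η))))
  have hunif := ((LipschitzWith.uniformEquicontinuous _ _ hlip).equicontinuous.equicontinuousOn
    K).tendstoUniformlyOn_of_tendsto hK fun η _ => hlim η
  intro δ hδ
  obtain ⟨N, hN⟩ := eventually_atTop.mp (Metric.tendstoUniformlyOn_iff.mp hunif δ hδ)
  exact ⟨N, fun n hn η hη => by simpa using hN n hn η hη⟩

end
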